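/- arXiv:1504.07297 — 2 statements merged into one kernel-verified Lean document; each statement's English description precedes it below -/
import Mathlib

section
/- Let n ≥ 1 and ω ∈ ℝ be such that h_n(ω) = 0 and h_{n−1}(ω) ≠ 0. Then for all x ∈ ℂ, p̃_{n+1}(x; ω) = i (h_n'(ω)/h_{n−1}(ω)) p̃_n(x; ω); that is, p̃_{n+1}(·; ω) is a scalar multiple of p̃_n(·; ω) at such critical values of ω (primes denote derivatives with respect to ω). -/
/-!
Let `H` be the Hankel matrix `(μ_{j+k})_{j,k ≤ N}` with `det H = 0`, and `w` the last row of its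
adjugate, so that `w H = 0` and `w_N = h_{N-1}`. Adding to column `N` of the matrix defining
`p̃_{N+1}` the combination of its first `N+1` columns with coefficients `w` multiplies the
determinant by `h_{N-1}` and turns that column into `(0, …, 0, D)`, where `D` is `det H` with the
last column shifted down by one moment. Expanding along it gives `h_{N-1} p̃_{N+1} = -D p̃_N`.
Since `μ_m' = i μ_{m+1}`, Jacobi's formula differentiates `det H` column by column, each column
becoming `i` times the next one; only the last column gives a nonzero term, so `h_N' = i D`.
-/

open MeasureTheory

/-- Moments of the oscillatory weight `e^{iωx}` on `[-1,1]`. -/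
noncomputable def mu (ω : ℝ) (n : ℕ) : ℂ :=
  ∫ x : ℝ in (-1 : ℝ)..1, (x : ℂ) ^ n * Complex.exp (Complex.I * ω * x)

/-- The `(n+1) × (n+1)` Hankel determinant of the moments. -/
noncomputable def hankel (n : ℕ) (ω : ℝ) : ℂ :=
  Matrix.det (Matrix.of fun j k : Fin (n + 1) => mu ω ((j : ℕ) + (k : ℕ)))

/-- The renormalized orthogonal polynomial `p̃_n(x; ω) = h_{n-1}(ω) p_n(x; ω)`,
as a Hankel-type determinant with last column `(1, x, …, x^n)`. -/
noncomputable def ptil (n : ℕ) (ω : ℝ) (x : ℂ) : ℂ :=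
  Matrix.det (Matrix.of fun j k : Fin (n + 1) =>
    if (k : ℕ) = n then x ^ (j : ℕ) else mu ω ((j : ℕ) + (k : ℕ)))

open Matrix Finset

namespace Matrix

variable {R : Type*} [CommRing R]

theorem mul_det_eq_of_mulVec_eq_single {m : ℕ} (M : Matrix (Fin (m + 1)) (Fin (m + 1)) R)
    {v : Fin (m + 1) → R} {i : Fin (m + 1)} {s : R} (hv : M *ᵥ v = Pi.single i s)
    (c : Fin (m + 1)) :
    v c * M.det = (-1) ^ (i + c : ℕ) * s * (M.submatrix i.succAbove c.succAbove).det := by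
  have hcol : (fun k => ∑ l, v l • M k l) = Pi.single i s := by
    rw [← hv]; ext k; simp [mulVec, dotProduct, mul_comm]
  rw [← smul_eq_mul, ← det_updateCol_sum, hcol, det_succ_column _ c,
    Fintype.sum_eq_single i fun k hk => by simp [hk]]
  simp [submatrix_updateCol_succAbove]

def hankelMatrix (a : ℕ → R) (N : ℕ) : Matrix (Fin N) (Fin N) R :=
  of fun j k => a (j + k)

def hankelPolyMatrix (a : ℕ → R) (m : ℕ) (x : R) : Matrix (Fin (m + 1)) (Fin (m + 1)) R :=
  (hankelMatrix a (m + 1)).updateCol (Fin.last m) fun j => x ^ (j : ℕ)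

section

variable (a : ℕ → R) (N : ℕ)

theorem adjugate_hankelMatrix_last_last :
    adjugate (hankelMatrix a (N + 1)) (Fin.last N) (Fin.last N) = (hankelMatrix a N).det := by
  rw [adjugate_fin_succ_eq_det_submatrix, ← two_mul, pow_mul, neg_one_sq, one_pow, one_mul]
  congr 1
  ext j k
  simp [hankelMatrix]

theorem sum_adjugate_hankelMatrix_mul (j : ℕ) :
    ∑ k, adjugate (hankelMatrix a (N + 1)) (Fin.last N) k * a (j + k) =
      ((hankelMatrix a (N + 1)).updateCol (Fin.last N) fun p => a (p + j)).det := by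
  rw [← cramer_apply, cramer_eq_adjugate_mulVec]
  simp [mulVec, dotProduct, add_comm]

theorem det_updateCol_last_hankelMatrix_eq_zero (h : (hankelMatrix a (N + 1)).det = 0)
    {j : ℕ} (hj : j < N + 1) :
    ((hankelMatrix a (N + 1)).updateCol (Fin.last N) fun p => a (p + j)).det = 0 := by
  obtain rfl | hjN := eq_or_ne j N
  · convert h using 2
    exact updateCol_eq_self _ (Fin.last _)
  · exact det_updateCol_eq_zero (M := hankelMatrix a (N + 1)) (i := (⟨j, hj⟩ : Fin (N + 1)))
      (by simpa [Fin.ext_iff] using hjN)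

theorem hankelPolyMatrix_mulVec_snoc_adjugate (h : (hankelMatrix a (N + 1)).det = 0) (x : R) :
    hankelPolyMatrix a (N + 1) x *ᵥ Fin.snoc (adjugate (hankelMatrix a (N + 1)) (Fin.last N)) 0 =
      Pi.single (Fin.last (N + 1))
        ((hankelMatrix a (N + 1)).updateCol (Fin.last N) fun p => a (p + (N + 1))).det := by
  ext j
  have hP (k : Fin (N + 1)) : hankelPolyMatrix a (N + 1) x j k.castSucc = a (j + k) := by
    simp [hankelPolyMatrix, hankelMatrix]
  rw [mulVec, dotProduct, Fin.sum_univ_castSucc]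
  simp only [Fin.snoc_castSucc, Fin.snoc_last, mul_zero, add_zero, hP, mul_comm (a _),
    sum_adjugate_hankelMatrix_mul]
  induction j using Fin.lastCases with
  | last => simp
  | cast j =>
    rw [Pi.single_eq_of_ne (Fin.castSucc_lt_last j).ne]
    exact det_updateCol_last_hankelMatrix_eq_zero a N h j.isLt

theorem submatrix_hankelPolyMatrix_succ (x : R) :
    (hankelPolyMatrix a (N + 1) x).submatrix (Fin.last (N + 1)).succAbove
      (Fin.last N).castSucc.succAbove = hankelPolyMatrix a N x := by
  ext j k
  refine Fin.lastCases ?_ (fun k => ?_) k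
  · simp [hankelPolyMatrix, hankelMatrix, Fin.ext_iff]
  · simp [hankelPolyMatrix, hankelMatrix]

theorem det_hankelMatrix_mul_det_hankelPolyMatrix_succ (h : (hankelMatrix a (N + 1)).det = 0)
    (x : R) :
    (hankelMatrix a N).det * (hankelPolyMatrix a (N + 1) x).det =
      -(((hankelMatrix a (N + 1)).updateCol (Fin.last N) fun p => a (p + (N + 1))).det *
        (hankelPolyMatrix a N x).det) := by
  have hsign : (-1 : R) ^ (N + 1 + N) = -1 := Odd.neg_one_pow ⟨N, by ring⟩
  have := mul_det_eq_of_mulVec_eq_single _ (hankelPolyMatrix_mulVec_snoc_adjugate a N h x)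
    (Fin.last N).castSucc
  rwa [Fin.snoc_castSucc, adjugate_hankelMatrix_last_last, submatrix_hankelPolyMatrix_succ,
    Fin.val_last, Fin.val_castSucc, Fin.val_last, hsign, neg_one_mul, neg_mul] at this

end

end Matrix

section Derivative

variable {𝕜 𝔸 : Type*} [NontriviallyNormedField 𝕜] [NormedCommRing 𝔸] [NormedAlgebra 𝕜 𝔸]

theorem Matrix.hasDerivAt_det {n : Type*} [Fintype n] [DecidableEq n] {M : 𝕜 → Matrix n n 𝔸}
    {M' : Matrix n n 𝔸} {t : 𝕜}
    (h : ∀ i j, HasDerivAt (fun t => M t i j) (M' i j) t) :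
    HasDerivAt (fun t => (M t).det) (∑ j, ((M t).updateCol j fun i => M' i j).det) t := by
  have hprod (σ : Equiv.Perm n) : HasDerivAt (fun t => ∏ j, M t (σ j) j)
      (∑ j, (∏ k ∈ univ.erase j, M t (σ k) k) * M' (σ j) j) t := by
    simpa using HasDerivAt.fun_finsetProd (u := univ) fun j _ => h (σ j) j
  have hdet : (fun t => (M t).det) =
      fun t => ∑ σ : Equiv.Perm n, ((Equiv.Perm.sign σ : ℤ) : 𝔸) * ∏ j, M t (σ j) j :=
    funext fun t => det_apply' (M t)
  rw [hdet]
  refine (HasDerivAt.fun_sum fun σ _ => (hprod σ).const_mul _).congr_deriv ?_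
  simp_rw [det_apply', mul_sum]
  rw [sum_comm]
  refine sum_congr rfl fun j _ => sum_congr rfl fun σ _ => ?_
  rw [← mul_prod_erase _ _ (mem_univ j),
    prod_congr rfl fun k hk => updateCol_ne (M := M t) (ne_of_mem_erase hk)]
  simp only [updateCol_self]
  ring

theorem Matrix.hasDerivAt_det_hankelMatrix {f : 𝕜 → ℕ → 𝔸} {c : 𝔸} {t : 𝕜} (N : ℕ)
    (hf : ∀ m, HasDerivAt (fun t => f t m) (c * f t (m + 1)) t) :
    HasDerivAt (fun t => (hankelMatrix (f t) (N + 1)).det)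
      (c * ((hankelMatrix (f t) (N + 1)).updateCol (Fin.last N)
        fun p => f t (p + (N + 1))).det) t := by
  refine (hasDerivAt_det (M := fun t => hankelMatrix (f t) (N + 1))
    (M' := of fun i j : Fin (N + 1) => c * f t (i + j + 1))
    fun i j => hf _).congr_deriv ?_
  rw [Fintype.sum_eq_single (Fin.last N)]
  · rw [← det_updateCol_smul]
    congr 2
  · intro q hq
    obtain ⟨q, rfl⟩ := Fin.exists_castSucc_eq.mpr hq
    have hcol : (fun p => of (fun i j : Fin (N + 1) => c * f t (i + j + 1)) p q.castSucc) =
        c • fun p => hankelMatrix (f t) (N + 1) p q.succ := by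
      ext p
      simp [hankelMatrix, add_assoc]
    rw [hcol, det_updateCol_smul, det_updateCol_eq_zero (Fin.castSucc_lt_succ (i := q)).ne',
      mul_zero]

end Derivative

open Complex in
theorem hasDerivAt_mu (m : ℕ) (ω : ℝ) :
    HasDerivAt (fun ω => mu ω m) (I * mu ω (m + 1)) ω := by
  have hderiv (t ω' : ℝ) : HasDerivAt (fun ω : ℝ => (t : ℂ) ^ m * cexp (I * ω * t))
      (I * ((t : ℂ) ^ (m + 1) * cexp (I * ω' * t))) ω' := by
    have hlin : HasDerivAt (fun ω : ℝ => I * ω * t) (I * t) ω' := by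
      simpa using ((ofRealCLM.hasDerivAt (x := ω')).const_mul I).mul_const (t : ℂ)
    exact (hlin.cexp.const_mul _).congr_deriv (by ring)
  have hbound : ∀ t ∈ Set.uIoc (-1 : ℝ) 1, ∀ ω' ∈ (Set.univ : Set ℝ),
      ‖I * ((t : ℂ) ^ (m + 1) * cexp (I * ω' * t))‖ ≤ 1 := by
    intro t ht ω' _
    rw [Set.uIoc_of_le (by norm_num)] at ht
    rw [norm_mul, norm_mul, norm_I, one_mul, norm_exp, norm_pow]
    simpa [mul_re] using pow_le_one₀ (abs_nonneg t) (abs_le.2 ⟨ht.1.le, ht.2⟩)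
  have h := (intervalIntegral.hasDerivAt_integral_of_dominated_loc_of_deriv_le
    (F := fun (ω : ℝ) (t : ℝ) => (t : ℂ) ^ m * cexp (I * ω * t))
    (F' := fun (ω : ℝ) (t : ℝ) => I * ((t : ℂ) ^ (m + 1) * cexp (I * ω * t)))
    (x₀ := ω) (μ := volume) (bound := fun _ => 1) Filter.univ_mem
    (.of_forall fun _ => (by fun_prop : Continuous _).aestronglyMeasurable)
    ((by fun_prop : Continuous _).intervalIntegrable _ _)
    (by fun_prop : Continuous _).aestronglyMeasurable (.of_forall hbound)
    intervalIntegrable_const (.of_forall fun t _ ω' _ => hderiv t ω')).2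
  rwa [intervalIntegral.integral_const_mul] at h

theorem ptil_eq_det_hankelPolyMatrix (n : ℕ) (ω : ℝ) (x : ℂ) :
    ptil n ω x = (hankelPolyMatrix (mu ω) n x).det := by
  unfold ptil
  congr 1
  ext j k
  simp [hankelPolyMatrix, hankelMatrix, updateCol_apply, Fin.ext_iff]

/-- Degeneracy at critical values of `ω` (indices shifted: original `n ≥ 1` corresponds to
`n + 1` here, so `h_n, h_{n-1}, p̃_{n+1}, p̃_n` become `hankel (n+1), hankel n,
ptil (n+2), ptil (n+1)`). -/
theorem stmt9 (n : ℕ) (ω : ℝ)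
    (h1 : hankel (n + 1) ω = 0) (h0 : hankel n ω ≠ 0) :
    ∀ x : ℂ, ptil (n + 2) ω x =
      Complex.I * (deriv (hankel (n + 1)) ω / hankel n ω) * ptil (n + 1) ω x := by
  intro x
  set D := ((hankelMatrix (mu ω) (n + 2)).updateCol (Fin.last (n + 1))
    fun p => mu ω (p + (n + 2))).det
  have hderiv : deriv (hankel (n + 1)) ω = Complex.I * D :=
    (hasDerivAt_det_hankelMatrix (n + 1) (hasDerivAt_mu · ω)).deriv
  have hcol : hankel n ω * ptil (n + 2) ω x = -(D * ptil (n + 1) ω x) := by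
    rw [ptil_eq_det_hankelPolyMatrix, ptil_eq_det_hankelPolyMatrix]
    exact det_hankelMatrix_mul_det_hankelPolyMatrix_succ (mu ω) (n + 1) h1 x
  rw [hderiv]
  field_simp
  rw [Complex.I_sq]
  linear_combination hcol
end

section
/- Two consecutive Hankel determinants have no common positive real zero: there is no n ≥ 1 and no ω* > 0 such that h_{n−1}(ω*) = 0 and h_n(ω*) = 0. -/
open MeasureTheory

/-!
Vanishing of `h_{n-1}(ω)` and `h_n(ω)` yields nonzero polynomials `p`, `q` with `deg p ≤ n - 1`,
`deg q ≤ n`, orthogonal for `L f = ∫_{-1}^1 f(x) e^{iωx} dx` to all polynomials of degree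
`≤ n - 1`, resp. `≤ n`. Integration by parts gives the string equation
`L f' + iω L f = f(1) e^{iω} - f(-1) e^{-iω}`. Applied to `(x ∓ 1) f²` it shows that if `f` is
orthogonal to all polynomials of degree `≤ m` for some `m > deg f`, then `f(±1) = 0`; so `f'`
inherits the orthogonality, and by induction on the degree `f = 0`. Hence `deg p = n - 1` and
`deg q = n`, and `q mod p` together with `p` is a pair of the same kind one level lower, unless
`q = (ax + b) p`, in which case `p` is orthogonal beyond its degree. Descending, no pair survives.
-/

open Polynomial

theorem Polynomial.natDegree_div_le_sub {K : Type*} [Field K] (g s : K[X]) :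
    (g / s).natDegree ≤ g.natDegree - s.natDegree := by
  rcases eq_or_ne s 0 with rfl | hs
  · simp
  rw [div_def]
  refine natDegree_C_mul_le _ _ |>.trans ?_
  rw [natDegree_divByMonic _ (monic_mul_leadingCoeff_inv hs),
    natDegree_mul_C (inv_ne_zero (leadingCoeff_ne_zero.2 hs))]

section OrthogonalUpTo

variable {K : Type*} [Field K]

def OrthogonalUpTo (L : K[X] →ₗ[K] K) (m : ℕ) (f : K[X]) : Prop :=
  ∀ g : K[X], g.natDegree ≤ m → L (g * f) = 0

variable {L : K[X] →ₗ[K] K} {m : ℕ} {f : K[X]}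

theorem OrthogonalUpTo.mono {m' : ℕ} (h : OrthogonalUpTo L m' f) (hm : m ≤ m') :
    OrthogonalUpTo L m f :=
  fun g hg => h g (hg.trans hm)

theorem orthogonalUpTo_of_X_pow_mul (h : ∀ j ≤ m, L (X ^ j * f) = 0) :
    OrthogonalUpTo L m f := by
  intro g hg
  rw [g.as_sum_range' (m + 1) (Nat.lt_succ_of_le hg), Finset.sum_mul, map_sum]
  refine Finset.sum_eq_zero fun j hj => ?_
  rw [← C_mul_X_pow_eq_monomial, mul_assoc, ← smul_eq_C_mul, map_smul,
    h j (Nat.lt_succ_iff.mp (Finset.mem_range.mp hj)), smul_zero]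

theorem OrthogonalUpTo.sub_mul {p q s : K[X]} (hq : OrthogonalUpTo L m q)
    (hp : OrthogonalUpTo L (m + s.natDegree) p) : OrthogonalUpTo L m (q - s * p) := by
  intro g hg
  rw [mul_sub, map_sub, hq g hg, ← mul_assoc, hp _ (natDegree_mul_le.trans (by omega)), sub_zero]

theorem OrthogonalUpTo.of_mul {l : ℕ} {p s : K[X]} (hsp : OrthogonalUpTo L m (s * p))
    (hp : OrthogonalUpTo L l p) (hs0 : s.natDegree ≠ 0) (hs : s.natDegree ≤ l + 1) :
    OrthogonalUpTo L (m + s.natDegree) p := by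
  intro g hg
  have hdiv : (g / s).natDegree ≤ m := (natDegree_div_le_sub g s).trans (by omega)
  have hmod : (g % s).natDegree ≤ l := by have := natDegree_mod_lt g hs0; omega
  rw [← EuclideanDomain.div_add_mod g s, add_mul, map_add, mul_comm s, mul_assoc, hsp _ hdiv,
    hp _ hmod, add_zero]

theorem exists_orthogonalUpTo_of_det_eq_zero
    (h : (Matrix.of fun j k : Fin (m + 1) => L (X ^ ((j : ℕ) + k))).det = 0) :
    ∃ p : K[X], p ≠ 0 ∧ p.natDegree ≤ m ∧ OrthogonalUpTo L m p := by
  classical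
  obtain ⟨u, hu, huz⟩ := Matrix.exists_mulVec_eq_zero_iff.mpr h
  refine ⟨ofFn (m + 1) u, (map_ne_zero_iff _ (injective_ofFn _)).2 hu,
    Nat.lt_succ_iff.mp (ofFn_natDegree_lt (Nat.succ_pos m) u),
    orthogonalUpTo_of_X_pow_mul fun j hj => ?_⟩
  have hrow := congrFun huz ⟨j, Nat.lt_succ_of_le hj⟩
  simp only [Matrix.mulVec, dotProduct, Matrix.of_apply, Pi.zero_apply] at hrow
  rw [ofFn_eq_sum_monomial, Finset.mul_sum, map_sum, ← hrow]
  refine Finset.sum_congr rfl fun k _ => ?_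
  rw [← C_mul_X_pow_eq_monomial, mul_left_comm, ← pow_add, ← smul_eq_C_mul, map_smul,
    smul_eq_mul, mul_comm]

variable {a b α β c : K}
  (hL : ∀ f : K[X], L (Polynomial.derivative f) + c * L f = f.eval b * β - f.eval a * α)
include hL

theorem OrthogonalUpTo.eval_right_eq_zero (hβ : β ≠ 0) (hab : a ≠ b)
    (h : OrthogonalUpTo L m f) (hd : f.natDegree < m) : f.eval b = 0 := by
  have hXf : ((X - C a) * f).natDegree ≤ m :=
    natDegree_mul_le.trans (by rw [natDegree_X_sub_C]; omega)
  have hder : (f + (X - C a) * (C 2 * derivative f)).natDegree ≤ m := by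
    refine natDegree_add_le_of_degree_le hd.le (natDegree_mul_le.trans ?_)
    have := (natDegree_C_mul_le 2 (derivative f)).trans (natDegree_derivative_le f)
    rw [natDegree_X_sub_C]
    omega
  have key := hL ((X - C a) * f * f)
  have : derivative ((X - C a) * f * f) = (f + (X - C a) * (C 2 * derivative f)) * f := by
    simp only [derivative_mul, derivative_sub, derivative_X, derivative_C, map_ofNat]
    ring
  rw [this, h _ hder, h _ hXf, mul_zero, add_zero] at key
  simp only [eval_mul, eval_sub, eval_X, eval_C, sub_self, zero_mul, sub_zero] at key
  have : f.eval b ^ 2 * ((b - a) * β) = 0 := by linear_combination -key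
  simpa [sub_ne_zero.2 hab.symm, hβ] using this

theorem OrthogonalUpTo.derivative (h : OrthogonalUpTo L m f) (ha : f.eval a = 0)
    (hb : f.eval b = 0) : OrthogonalUpTo L m (derivative f) := by
  intro g hg
  have key := hL (g * f)
  rw [derivative_mul, map_add, h g hg,
    h _ ((natDegree_derivative_le g).trans (by omega))] at key
  simp only [eval_mul, ha, hb] at key
  linear_combination key

theorem OrthogonalUpTo.eq_zero_of_natDegree_lt [CharZero K] (hα : α ≠ 0) (hβ : β ≠ 0)
    (hab : a ≠ b) (h : OrthogonalUpTo L m f) (hd : f.natDegree < m) : f = 0 := by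
  obtain ⟨n, hn⟩ : ∃ n, f.natDegree = n := ⟨_, rfl⟩
  induction n using Nat.strong_induction_on generalizing f with
  | _ n ih =>
    have hL' (g : K[X]) :
        L (Polynomial.derivative g) + c * L g = g.eval a * -α - g.eval b * -β := by
      linear_combination hL g
    have hb := h.eval_right_eq_zero hL hβ hab hd
    have ha := h.eval_right_eq_zero hL' (neg_ne_zero.2 hα) hab.symm hd
    have hder : Polynomial.derivative f = 0 := by
      by_cases h0 : f.natDegree = 0
      · exact derivative_eq_zero.2 h0
      · have hlt := natDegree_derivative_lt h0
        exact ih _ (hn ▸ hlt) (h.derivative hL ha hb) (hlt.trans hd) rfl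
    rw [eq_C_of_derivative_eq_zero hder, eval_C] at hb
    rw [eq_C_of_derivative_eq_zero hder, hb, C_0]

theorem OrthogonalUpTo.natDegree_eq [CharZero K] (hα : α ≠ 0) (hβ : β ≠ 0) (hab : a ≠ b)
    (h : OrthogonalUpTo L m f) (hf : f ≠ 0) (hd : f.natDegree ≤ m) : f.natDegree = m :=
  hd.eq_or_lt.resolve_right fun hlt => hf (h.eq_zero_of_natDegree_lt hL hα hβ hab hlt)

theorem OrthogonalUpTo.eq_zero_of_orthogonalUpTo_succ [CharZero K] (hα : α ≠ 0) (hβ : β ≠ 0)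
    (hab : a ≠ b) {p q : K[X]} (hpo : OrthogonalUpTo L m p) (hp : p ≠ 0) (hpd : p.natDegree ≤ m)
    (hqo : OrthogonalUpTo L (m + 1) q) (hqd : q.natDegree ≤ m + 1) : q = 0 := by
  induction m using Nat.strong_induction_on generalizing p q with
  | _ m ih =>
    by_contra hq
    have hpm := hpo.natDegree_eq hL hα hβ hab hp hpd
    have hqm := hqo.natDegree_eq hL hα hβ hab hq hqd
    have hs : (q / p).natDegree ≤ 1 := (natDegree_div_le_sub q p).trans (by omega)
    rcases eq_or_ne (q % p) 0 with hr | hr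
    · have hqp : q = q / p * p := by simpa [hr] using (EuclideanDomain.mod_add_div' q p).symm
      have hs0 : q / p ≠ 0 := fun h0 => hq (by rw [hqp, h0, zero_mul])
      have hs1 : (q / p).natDegree = 1 := by
        have := congrArg natDegree hqp
        rw [natDegree_mul hs0 hp] at this
        omega
      have hpo' := (hqp ▸ hqo).of_mul hpo (by omega) (by omega)
      exact hp (hpo'.eq_zero_of_natDegree_lt hL hα hβ hab (by omega))
    · have hrd : (q % p).natDegree < m := by
        rw [natDegree_lt_iff_degree_lt hr, ← hpm, ← degree_eq_natDegree hp]
        exact degree_mod_lt q hp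
      obtain ⟨m, rfl⟩ : ∃ m', m = m' + 1 := ⟨m - 1, by omega⟩
      have hro : OrthogonalUpTo L m (q % p) := by
        rw [eq_sub_of_add_eq (EuclideanDomain.mod_add_div' q p)]
        exact (hqo.mono (by omega)).sub_mul (hpo.mono (by omega))
      exact hp (ih m (by omega) hro hr (by omega) hpo hpd)

end OrthogonalUpTo

open Complex intervalIntegral

section Moment

variable (ω : ℝ)

theorem continuous_eval_mul_exp (f : ℂ[X]) :
    Continuous fun x : ℝ => f.eval (x : ℂ) * exp (I * ω * x) := by
  fun_prop

noncomputable def momentFunctional : ℂ[X] →ₗ[ℂ] ℂ where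
  toFun f := ∫ x : ℝ in (-1)..1, f.eval (x : ℂ) * exp (I * ω * x)
  map_add' f g := by
    simp only [eval_add, add_mul]
    exact integral_add ((continuous_eval_mul_exp ω f).intervalIntegrable _ _)
      ((continuous_eval_mul_exp ω g).intervalIntegrable _ _)
  map_smul' a f := by
    simp only [eval_smul, smul_eq_mul, mul_assoc, RingHom.id_apply]
    exact intervalIntegral.integral_const_mul _ _

theorem momentFunctional_X_pow (n : ℕ) : momentFunctional ω (X ^ n) = mu ω n := by
  simp [momentFunctional, mu]

theorem hankel_eq_det_momentFunctional (n : ℕ) :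
    hankel n ω =
      (Matrix.of fun j k : Fin (n + 1) => momentFunctional ω (X ^ ((j : ℕ) + k))).det := by
  simp only [hankel, momentFunctional_X_pow]

theorem momentFunctional_derivative (f : ℂ[X]) :
    momentFunctional ω (derivative f) + I * ω * momentFunctional ω f =
      f.eval 1 * exp (I * ω) - f.eval (-1) * exp (-(I * ω)) := by
  have hderiv (x : ℝ) : HasDerivAt (fun t : ℝ => f.eval (t : ℂ) * exp (I * ω * t))
      ((derivative f).eval (x : ℂ) * exp (I * ω * x)
        + I * ω * (f.eval (x : ℂ) * exp (I * ω * x))) x :=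
    ((f.hasDerivAt (x : ℂ)).mul
      (((hasDerivAt_id (x : ℂ)).const_mul (I * ω)).cexp)).comp_ofReal.congr_deriv
        (by simp only [id, mul_one]; ring)
  have hint (g : ℂ[X]) : IntervalIntegrable (fun x : ℝ => g.eval (x : ℂ) * exp (I * ω * x))
      volume (-1) 1 :=
    (continuous_eval_mul_exp ω g).intervalIntegrable _ _
  have := integral_eq_sub_of_hasDerivAt (fun x _ => hderiv x)
    ((hint _).add ((hint f).const_mul _))
  rw [integral_add (hint _) ((hint f).const_mul _),
    intervalIntegral.integral_const_mul] at this
  simpa [momentFunctional] using this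

end Moment

/-- Two consecutive Hankel determinants have no common positive real zero. -/
theorem stmt17 :
    ¬ ∃ (n : ℕ) (ω : ℝ), 1 ≤ n ∧ 0 < ω ∧ hankel (n - 1) ω = 0 ∧ hankel n ω = 0 := by
  rintro ⟨n, ω, hn, -, hprev, hcur⟩
  obtain ⟨m, rfl⟩ := Nat.exists_eq_add_of_le' hn
  rw [Nat.add_sub_cancel, hankel_eq_det_momentFunctional] at hprev
  rw [hankel_eq_det_momentFunctional] at hcur
  obtain ⟨p, hp, hpd, hpo⟩ := exists_orthogonalUpTo_of_det_eq_zero hprev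
  obtain ⟨q, hq, hqd, hqo⟩ := exists_orthogonalUpTo_of_det_eq_zero hcur
  exact hq (hpo.eq_zero_of_orthogonalUpTo_succ (momentFunctional_derivative ω) (exp_ne_zero _)
    (exp_ne_zero _) (by norm_num) hp hpd hqo hqd)
end
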